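/- arXiv:1504.04938 — 4 statements merged into one kernel-verified Lean document; each statement's English description precedes it below -/
import Mathlib

section
/- If G is a graph admitting an ordered clique cover C = (C₁, …, C_k) with length l(G,G,C) = 1 (i.e., every edge xy of G with x ∈ C_i, y ∈ C_j satisfies |i − j| ≤ 1), then the complement of G is a comparability graph, i.e., G is an incomparability graph. -/
/-- If `G` admits an ordered clique cover `(C₁, …, C_k)` (cliques partitioning the
vertex set) of length 1 — every edge joins vertices in the same or consecutive
cliques — then the complement of `G` is a comparability graph, i.e. `G` is an
incomparability graph. -/
theorem incomparability_of_length_one {V : Type*} [Fintype V] [DecidableEq V]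
    (G : SimpleGraph V) (k : ℕ) (C : Fin k → Finset V)
    (hclique : ∀ i, G.IsClique ↑(C i))
    (hcover : ∀ v : V, ∃ i, v ∈ C i)
    (hdisj : ∀ i j : Fin k, i ≠ j → Disjoint (C i) (C j))
    (hlen : ∀ x y : V, G.Adj x y → ∀ i j : Fin k, x ∈ C i → y ∈ C j →
      |((i : ℕ) : ℤ) - ((j : ℕ) : ℤ)| ≤ 1) :
    ∃ r : V → V → Prop, IsIrrefl V r ∧ IsTrans V r ∧
      ∀ x y : V, Gᶜ.Adj x y ↔ (r x y ∨ r y x) := by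
  classical
  -- index function
  let idx : V → Fin k := fun v => (hcover v).choose
  have hidx : ∀ v, v ∈ C (idx v) := fun v => (hcover v).choose_spec
  -- vertices in the same clique index are adjacent or equal
  have hsame : ∀ x y : V, idx x = idx y → x ≠ y → G.Adj x y := by
    intro x y h hne
    exact hclique (idx x) (hidx x) (h ▸ hidx y) hne
  refine ⟨fun x y => ¬G.Adj x y ∧ idx x < idx y, ⟨?_⟩, ⟨?_⟩, ?_⟩
  · intro a h
    exact lt_irrefl _ h.2
  · rintro a b c ⟨hab, h1⟩ ⟨hbc, h2⟩
    refine ⟨?_, h1.trans h2⟩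
    intro hac
    have := hlen a c hac (idx a) (idx c) (hidx a) (hidx c)
    have h1' : ((idx a : ℕ) : ℤ) < (idx b : ℕ) := by exact_mod_cast h1
    have h2' : ((idx b : ℕ) : ℤ) < (idx c : ℕ) := by exact_mod_cast h2
    rw [abs_sub_le_iff] at this
    omega
  · intro x y
    rw [SimpleGraph.compl_adj]
    constructor
    · rintro ⟨hne, hadj⟩
      rcases lt_trichotomy (idx x) (idx y) with h | h | h
      · exact Or.inl ⟨hadj, h⟩
      · exact absurd (hsame x y h hne) hadj
      · exact Or.inr ⟨fun h' => hadj h'.symm, h⟩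
    · rintro (⟨hadj, h⟩ | ⟨hadj, h⟩)
      · exact ⟨fun he => absurd (he ▸ h) (lt_irrefl _), hadj⟩
      · exact ⟨fun he => absurd (he ▸ h) (lt_irrefl _), fun h' => hadj h'.symm⟩
end

section
/- Let μ be a measure function on a graph G and let (C₁, …, C_k) be an ordered clique cover of a graph H on the same vertex set with E(G) ⊆ E(H) and l(G,H,C) = 1. Then there exists an index i such that removing the clique C_i from G separates G into two parts A and B with no edges between them, each satisfying μ(G[A]) ≤ 2μ(G)/3 and μ(G[B]) ≤ 2μ(G)/3, provided μ(G[C_j]) ≤ μ(G)/3 for every j. -/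
/-- If `μ` is a measure function on `G`, and `(C₁, …, C_k)` is an ordered clique
cover of a graph `H` on the same vertex set with `E(G) ⊆ E(H)` and length 1 with
respect to `G`, and every clique of the cover has measure at most `μ(G)/3`, then
some clique `C_i` separates `G` into two parts each of measure at most `2μ(G)/3`. -/
theorem length_one_separator {V : Type*} [Fintype V] [DecidableEq V]
    (G H : SimpleGraph V) (hsub : ∀ x y : V, G.Adj x y → H.Adj x y)
    (μ : Set V → ℝ)
    (h0 : ∀ A : Set V, 0 ≤ μ A)
    (h1 : ∀ A B : Set V, A ⊆ B → μ A ≤ μ B)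
    (h2 : ∀ A B : Set V, μ (A ∪ B) ≤ μ A + μ B)
    (h3 : ∀ A B : Set V, (∀ a ∈ A, ∀ b ∈ B, ¬ G.Adj a b) → μ (A ∪ B) = μ A + μ B)
    (k : ℕ) (hk : 0 < k) (C : Fin k → Finset V)
    (hclique : ∀ i, H.IsClique ↑(C i))
    (hcover : ∀ v : V, ∃ i, v ∈ C i)
    (hdisj : ∀ i j : Fin k, i ≠ j → Disjoint (C i) (C j))
    (hlen : ∀ x y : V, G.Adj x y → ∀ i j : Fin k, x ∈ C i → y ∈ C j →
      |((i : ℕ) : ℤ) - ((j : ℕ) : ℤ)| ≤ 1)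
    (hsmall : ∀ j : Fin k, μ ↑(C j) ≤ μ Set.univ / 3) :
    ∃ i : Fin k, ∃ A B : Set V,
      A ∪ B = Set.univ \ ↑(C i) ∧ Disjoint A B ∧
      (∀ a ∈ A, ∀ b ∈ B, ¬ G.Adj a b) ∧
      μ A ≤ 2 * μ Set.univ / 3 ∧ μ B ≤ 2 * μ Set.univ / 3 := by
  classical
  set M := μ Set.univ with hMdef
  have hM0 : 0 ≤ M := h0 _
  have hempty : μ ∅ = 0 := by
    have h := h3 ∅ ∅ (by simp)
    simp only [Set.union_self] at h
    linarith
  set Lo : Fin k → Set V := fun i => {v | ∃ j : Fin k, j < i ∧ v ∈ C j} with hLodef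
  set Hi : Fin k → Set V := fun i => {v | ∃ j : Fin k, i < j ∧ v ∈ C j} with hHidef
  have noedge : ∀ p : Fin k, ∀ a ∈ Lo p, ∀ b ∈ Hi p, ¬ G.Adj a b := by
    rintro p a ⟨j, hj, haj⟩ b ⟨m, hm, hbm⟩ hadj
    have habs := hlen a b hadj j m haj hbm
    rw [abs_le] at habs
    have hj' : (j : ℕ) < (p : ℕ) := hj
    have hm' : (p : ℕ) < (m : ℕ) := hm
    omega
  have sum_le : ∀ p : Fin k, μ (Lo p) + μ (Hi p) ≤ M := by
    intro p
    rw [← h3 _ _ (noedge p)]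
    exact h1 _ _ (Set.subset_univ _)
  -- the set of candidate separators
  set S : Finset (Fin k) := Finset.univ.filter (fun i => μ (Hi i) ≤ 2 * M / 3) with hSdef
  have hne : S.Nonempty := by
    refine ⟨⟨k - 1, by omega⟩, ?_⟩
    rw [hSdef, Finset.mem_filter]
    refine ⟨Finset.mem_univ _, ?_⟩
    have : Hi ⟨k - 1, by omega⟩ = ∅ := by
      ext v
      simp only [hHidef, Set.mem_setOf_eq, Set.mem_empty_iff_false, iff_false]
      rintro ⟨j, hj, -⟩
      have : (k - 1 : ℕ) < (j : ℕ) := hj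
      have := j.isLt
      omega
    rw [this, hempty]
    positivity
  set i : Fin k := S.min' hne with hidef
  have hiS : i ∈ S := S.min'_mem hne
  have hBle : μ (Hi i) ≤ 2 * M / 3 := by
    have := hiS
    rw [hSdef, Finset.mem_filter] at this
    exact this.2
  have hmin : ∀ p : Fin k, p < i → 2 * M / 3 < μ (Hi p) := by
    intro p hp
    by_contra hle
    push_neg at hle
    have hpS : p ∈ S := by
      rw [hSdef, Finset.mem_filter]; exact ⟨Finset.mem_univ _, hle⟩
    exact absurd (S.min'_le p hpS) (not_le.mpr hp)
  have hAle : μ (Lo i) ≤ 2 * M / 3 := by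
    by_cases h0i : (i : ℕ) = 0
    · have : Lo i = ∅ := by
        ext v
        simp only [hLodef, Set.mem_setOf_eq, Set.mem_empty_iff_false, iff_false]
        rintro ⟨j, hj, -⟩
        have : (j : ℕ) < (i : ℕ) := hj
        omega
      rw [this, hempty]
      positivity
    · set p : Fin k := ⟨(i : ℕ) - 1, by have := i.isLt; omega⟩ with hpdef
      have hpv : (p : ℕ) = (i : ℕ) - 1 := rfl
      have hpi : p < i := by
        show (p : ℕ) < (i : ℕ)
        omega
      have hHp := hmin p hpi
      have hLp : μ (Lo p) < M / 3 := by
        have := sum_le p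
        linarith
      have hsubLo : Lo i ⊆ Lo p ∪ ↑(C p) := by
        rintro v ⟨j, hj, hv⟩
        have hj' : (j : ℕ) < (i : ℕ) := hj
        by_cases hjp : (j : ℕ) < (p : ℕ)
        · exact Or.inl ⟨j, hjp, hv⟩
        · have : j = p := Fin.ext (by omega)
          exact Or.inr (this ▸ hv)
      calc μ (Lo i) ≤ μ (Lo p ∪ ↑(C p)) := h1 _ _ hsubLo
        _ ≤ μ (Lo p) + μ ↑(C p) := h2 _ _
        _ ≤ 2 * M / 3 := by have := hsmall p; linarith
  refine ⟨i, Lo i, Hi i, ?_, ?_, noedge i, hAle, hBle⟩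
  · ext v
    constructor
    · rintro (⟨j, hj, hv⟩ | ⟨j, hj, hv⟩)
      · exact ⟨Set.mem_univ _, fun hvC =>
          Finset.disjoint_left.mp (hdisj j i (Fin.ne_of_lt hj)) hv hvC⟩
      · exact ⟨Set.mem_univ _, fun hvC =>
          Finset.disjoint_left.mp (hdisj j i (Fin.ne_of_lt hj).symm) hv hvC⟩
    · rintro ⟨-, hv⟩
      obtain ⟨j, hj⟩ := hcover v
      have hji : j ≠ i := by rintro rfl; exact hv hj
      rcases lt_or_gt_of_ne hji with h | h
      · exact Or.inl ⟨j, h, hj⟩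
      · exact Or.inr ⟨j, h, hj⟩
  · rw [Set.disjoint_left]
    rintro v ⟨j, hj, hvj⟩ ⟨m, hm, hvm⟩
    have hjm : j ≠ m := by
      intro h; rw [h] at hj; exact absurd (hj.trans hm) (lt_irrefl _)
    exact Finset.disjoint_left.mp (hdisj j m hjm) hvj hvm
end

section
/- Every chordal graph G that is not complete contains a vertex separator that is a clique: there exist nonadjacent vertices u, v and a clique S such that u and v lie in different connected components of G − S. -/
open SimpleGraph Walk

/-- A graph is chordal if every cycle of length at least 4 has a chord. -/
def IsChordal {V : Type*} (G : SimpleGraph V) : Prop :=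
  ∀ ⦃u : V⦄ (w : G.Walk u u), w.IsCycle → 4 ≤ w.length →
    ∃ x y : V, x ∈ w.support ∧ y ∈ w.support ∧ G.Adj x y ∧ s(x, y) ∉ w.edges

section Aux

variable {V : Type*} [DecidableEq V] {G : SimpleGraph V}

private lemma edge_mem_of_len_one {a b : V} (r : G.Walk a b) (h : r.length = 1) :
    s(a, b) ∈ r.edges := by
  cases r with
  | nil => simp at h
  | cons h' q =>
    cases q with
    | nil => simp
    | cons h'' q' => simp [Walk.length_cons] at h

/-- A minimal-length walk with interior in `C` is a chordless path. -/
private lemma exists_chordless_path {x y : V} (C : Set V)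
    (h : ∃ r : G.Walk x y, ∀ w ∈ r.support, w ≠ x → w ≠ y → w ∈ C) :
    ∃ P : G.Walk x y, (∀ w ∈ P.support, w ≠ x → w ≠ y → w ∈ C) ∧ P.IsPath ∧
      ∀ a b : V, a ∈ P.support → b ∈ P.support → G.Adj a b → s(a, b) ∈ P.edges := by
  classical
  have hex : ∃ n, ∃ r : G.Walk x y,
      (∀ w ∈ r.support, w ≠ x → w ≠ y → w ∈ C) ∧ r.length = n := by
    obtain ⟨r, hr⟩ := h; exact ⟨r.length, r, hr, rfl⟩
  obtain ⟨r, hr, hrlen⟩ := Nat.find_spec hex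
  have hmin : ∀ r' : G.Walk x y, (∀ w ∈ r'.support, w ≠ x → w ≠ y → w ∈ C) →
      Nat.find hex ≤ r'.length := fun r' h' => Nat.find_min' hex ⟨r', h', rfl⟩
  set P := r.bypass with hPdef
  have hPC : ∀ w ∈ P.support, w ≠ x → w ≠ y → w ∈ C :=
    fun w hw => hr w (r.support_bypass_subset hw)
  have hPlen : P.length = Nat.find hex :=
    le_antisymm (hrlen ▸ r.length_bypass_le) (hmin _ hPC)
  refine ⟨P, hPC, r.bypass_isPath, ?_⟩
  intro a b ha hb hadj
  by_contra hne
  have hsplit : b ∈ (P.takeUntil a ha).support ∨ b ∈ (P.dropUntil a ha).support := by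
    have hts := P.take_spec ha
    conv at hb => rw [← hts]
    rw [Walk.support_append, List.mem_append] at hb
    exact hb.imp id List.mem_of_mem_tail
  have hlen1 : (P.takeUntil a ha).length + (P.dropUntil a ha).length = P.length := by
    rw [← Walk.length_append, P.take_spec ha]
  rcases hsplit with hb' | hb'
  · -- b occurs before a
    set t := P.takeUntil a ha with htdef
    set d := P.dropUntil a ha with hddef
    have hlen2 : (t.takeUntil b hb').length + (t.dropUntil b hb').length = t.length := by
      rw [← Walk.length_append, t.take_spec hb']
    have h2 : 2 ≤ (t.dropUntil b hb').length := by
      rcases Nat.lt_or_ge (t.dropUntil b hb').length 2 with hlt | hge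
      · interval_cases hl : (t.dropUntil b hb').length
        · exact absurd (Walk.eq_of_length_eq_zero hl) hadj.ne'
        · exfalso
          apply hne
          have := edge_mem_of_len_one _ hl
          rw [Sym2.eq_swap] at this
          exact P.edges_takeUntil_subset ha (t.edges_dropUntil_subset hb' this)
      · exact hge
    set r' : G.Walk x y := (t.takeUntil b hb').append (Walk.cons hadj.symm d) with hr'def
    have hr'C : ∀ w ∈ r'.support, w ≠ x → w ≠ y → w ∈ C := by
      intro w hw
      apply hPC w
      rw [hr'def, Walk.support_append, Walk.support_cons, List.tail_cons,
        List.mem_append] at hw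
      rcases hw with hw | hw
      · exact P.support_takeUntil_subset ha (t.support_takeUntil_subset hb' hw)
      · exact P.support_dropUntil_subset ha hw
    have hlt : r'.length < P.length := by
      rw [hr'def, Walk.length_append, Walk.length_cons]
      omega
    have := hmin r' hr'C
    omega
  · -- b occurs after a
    set t := P.takeUntil a ha with htdef
    set d := P.dropUntil a ha with hddef
    have hlen2 : (d.takeUntil b hb').length + (d.dropUntil b hb').length = d.length := by
      rw [← Walk.length_append, d.take_spec hb']
    have h2 : 2 ≤ (d.takeUntil b hb').length := by
      rcases Nat.lt_or_ge (d.takeUntil b hb').length 2 with hlt | hge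
      · interval_cases hl : (d.takeUntil b hb').length
        · exact absurd (Walk.eq_of_length_eq_zero hl) hadj.ne
        · exfalso
          apply hne
          have := edge_mem_of_len_one _ hl
          exact P.edges_dropUntil_subset ha (d.edges_takeUntil_subset hb' this)
      · exact hge
    set r' : G.Walk x y := t.append (Walk.cons hadj (d.dropUntil b hb')) with hr'def
    have hr'C : ∀ w ∈ r'.support, w ≠ x → w ≠ y → w ∈ C := by
      intro w hw
      apply hPC w
      rw [hr'def, Walk.support_append, Walk.support_cons, List.tail_cons,
        List.mem_append] at hw
      rcases hw with hw | hw
      · exact P.support_takeUntil_subset ha hw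
      · exact P.support_dropUntil_subset ha (d.support_dropUntil_subset hb' hw)
    have hlt : r'.length < P.length := by
      rw [hr'def, Walk.length_append, Walk.length_cons]
      omega
    have := hmin r' hr'C
    omega

end Aux

/-- Every chordal graph that is not complete contains a clique separator:
there exist nonadjacent vertices `u ≠ v` and a clique `S` avoiding both,
such that every walk from `u` to `v` meets `S`. -/
theorem chordal_clique_separator {V : Type*} [Fintype V] (G : SimpleGraph V)
    (hch : IsChordal G) (hnc : ¬ ∀ x y : V, x ≠ y → G.Adj x y) :
    ∃ (u v : V) (S : Set V), u ≠ v ∧ ¬ G.Adj u v ∧ G.IsClique S ∧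
      u ∉ S ∧ v ∉ S ∧ ∀ p : G.Walk u v, ∃ w ∈ p.support, w ∈ S := by
  classical
  push_neg at hnc
  obtain ⟨u, v, hneuv, hnadjuv⟩ := hnc
  by_cases hconn : Nonempty (G.Walk u v)
  case neg =>
    exact ⟨u, v, ∅, hneuv, hnadjuv, G.isClique_empty, Set.notMem_empty u,
      Set.notMem_empty v, fun p => absurd ⟨p⟩ hconn⟩
  -- there is at least one separator: all vertices other than u, v
  have hex : ∃ n, ∃ S : Finset V,
      ((∀ p : G.Walk u v, ∃ w ∈ p.support, w ∈ S) ∧ u ∉ S ∧ v ∉ S) ∧ S.card = n := by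
    refine ⟨_, Finset.univ \ {u, v}, ⟨⟨?_, by simp, by simp⟩, rfl⟩⟩
    intro p
    cases p with
    | nil => exact absurd rfl hneuv
    | @cons _ c _ h q =>
      refine ⟨c, ?_, ?_⟩
      · rw [Walk.support_cons]
        exact List.mem_cons_of_mem _ q.start_mem_support
      · simp only [Finset.mem_sdiff, Finset.mem_univ, Finset.mem_insert,
          Finset.mem_singleton, true_and]
        push_neg
        exact ⟨fun hc => G.irrefl (hc ▸ h), fun hc => hnadjuv (hc ▸ h)⟩
  obtain ⟨S, ⟨hSsep, hSu, hSv⟩, hScard⟩ := Nat.find_spec hex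
  have hmin : ∀ T : Finset V,
      ((∀ p : G.Walk u v, ∃ w ∈ p.support, w ∈ T) ∧ u ∉ T ∧ v ∉ T) →
      Nat.find hex ≤ T.card := fun T hT => Nat.find_min' hex ⟨T, hT, rfl⟩
  set Cu : Set V := {a : V | ∃ q : G.Walk u a, ∀ w ∈ q.support, w ∉ S} with hCu
  set Cv : Set V := {a : V | ∃ q : G.Walk v a, ∀ w ∈ q.support, w ∉ S} with hCv
  have hnoSwalk : ∀ q : G.Walk u v, ¬ ∀ w ∈ q.support, w ∉ S := by
    intro q hq
    obtain ⟨w, hw1, hw2⟩ := hSsep q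
    exact hq w hw1 hw2
  have hdisj : ∀ a, a ∈ Cu → a ∈ Cv → False := by
    rintro a ⟨qa, hqa⟩ ⟨qb, hqb⟩
    apply hnoSwalk (qa.append qb.reverse)
    intro w hw
    rw [Walk.support_append, List.mem_append] at hw
    rcases hw with hw | hw
    · exact hqa w hw
    · refine hqb w ?_
      have := List.mem_of_mem_tail hw
      rwa [Walk.support_reverse, List.mem_reverse] at this
  have hnoedge : ∀ a b, a ∈ Cu → b ∈ Cv → ¬ G.Adj a b := by
    rintro a b ⟨qa, hqa⟩ ⟨qb, hqb⟩ hab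
    apply hnoSwalk (qa.append (Walk.cons hab qb.reverse))
    intro w hw
    rw [Walk.support_append, Walk.support_cons, List.tail_cons, List.mem_append] at hw
    rcases hw with hw | hw
    · exact hqa w hw
    · refine hqb w ?_
      rwa [Walk.support_reverse, List.mem_reverse] at hw
  have hCuS : ∀ a ∈ Cu, a ∉ S := by
    rintro a ⟨qa, hqa⟩
    exact hqa a qa.end_mem_support
  have hCvS : ∀ a ∈ Cv, a ∉ S := by
    rintro a ⟨qa, hqa⟩
    exact hqa a qa.end_mem_support
  -- key: each vertex of S has connections to both sides
  have hside : ∀ z ∈ S, (∃ t : G.Walk u z, ∀ w ∈ t.support, w ≠ z → w ∈ Cu) ∧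
      (∃ d : G.Walk z v, ∀ w ∈ d.support, w ≠ z → w ∈ Cv) := by
    intro z hz
    have hcard : (S.erase z).card < Nat.find hex := by
      rw [← hScard]; exact Finset.card_erase_lt_of_mem hz
    have hnotsep : ¬ ∀ p : G.Walk u v, ∃ w ∈ p.support, w ∈ S.erase z := by
      intro hsep'
      have := hmin (S.erase z) ⟨hsep',
        fun h => hSu (Finset.mem_of_mem_erase h),
        fun h => hSv (Finset.mem_of_mem_erase h)⟩
      omega
    push_neg at hnotsep
    obtain ⟨p, hp⟩ := hnotsep
    set p' := p.bypass with hp'def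
    have hp'path : p'.IsPath := p.bypass_isPath
    have hp'avoid : ∀ w ∈ p'.support, w ∈ S → w = z := by
      intro w hw hwS
      by_contra hnez
      exact hp w (p.support_bypass_subset hw) (Finset.mem_erase.mpr ⟨hnez, hwS⟩)
    obtain ⟨z', hz'1, hz'2⟩ := hSsep p'
    have hzmem : z ∈ p'.support := (hp'avoid z' hz'1 hz'2) ▸ hz'1
    constructor
    · refine ⟨p'.takeUntil z hzmem, ?_⟩
      intro w hw hwz
      set t := p'.takeUntil z hzmem with htdef
      refine ⟨t.takeUntil w hw, ?_⟩
      intro c hc hcS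
      have hcz : c = z := hp'avoid c
        (p'.support_takeUntil_subset hzmem (t.support_takeUntil_subset hw hc)) hcS
      subst hcz
      have htpath : t.IsPath := hp'path.takeUntil hzmem
      have hnodup : t.support.Nodup := htpath.support_nodup
      conv at hnodup => rw [← t.take_spec hw]
      rw [Walk.support_append] at hnodup
      refine List.disjoint_of_nodup_append hnodup hc ?_
      have hend : c ∈ (t.dropUntil w hw).support := Walk.end_mem_support _
      rw [Walk.support_eq_cons (t.dropUntil w hw)] at hend
      rw [List.mem_cons] at hend
      exact hend.resolve_left (fun h => absurd h.symm hwz)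
    · refine ⟨p'.dropUntil z hzmem, ?_⟩
      intro w hw hwz
      set d := p'.dropUntil z hzmem with hddef
      refine ⟨(d.dropUntil w hw).reverse, ?_⟩
      intro c hc hcS
      rw [Walk.support_reverse, List.mem_reverse] at hc
      have hcz : c = z := hp'avoid c
        (p'.support_dropUntil_subset hzmem (d.support_dropUntil_subset hw hc)) hcS
      subst hcz
      have hdpath : d.IsPath := hp'path.dropUntil hzmem
      have hnodup : d.support.Nodup := hdpath.support_nodup
      conv at hnodup => rw [← d.take_spec hw]
      rw [Walk.support_append] at hnodup
      have hstart : c ∈ (d.takeUntil w hw).support := Walk.start_mem_support _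
      refine List.disjoint_of_nodup_append hnodup hstart ?_
      rw [Walk.support_eq_cons (d.dropUntil w hw)] at hc
      rw [List.mem_cons] at hc
      exact hc.resolve_left (fun h => absurd h.symm hwz)
  refine ⟨u, v, ↑S, hneuv, hnadjuv, ?_, by simpa using hSu, by simpa using hSv,
    fun p => by simpa using hSsep p⟩
  rw [SimpleGraph.isClique_iff]
  intro x hx y hy hxy
  by_contra hnadj2
  have hxS : x ∈ S := hx
  have hyS : y ∈ S := hy
  obtain ⟨⟨tx, htx⟩, ⟨dx, hdx⟩⟩ := hside x hxS
  obtain ⟨⟨ty, hty⟩, ⟨dy, hdy⟩⟩ := hside y hyS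
  have hexu : ∃ r : G.Walk x y, ∀ w ∈ r.support, w ≠ x → w ≠ y → w ∈ Cu := by
    refine ⟨tx.reverse.append ty, ?_⟩
    intro w hw hwx hwy
    rw [Walk.support_append, List.mem_append] at hw
    rcases hw with hw | hw
    · rw [Walk.support_reverse, List.mem_reverse] at hw
      exact htx w hw hwx
    · exact hty w (List.mem_of_mem_tail hw) hwy
  have hexv : ∃ r : G.Walk x y, ∀ w ∈ r.support, w ≠ x → w ≠ y → w ∈ Cv := by
    refine ⟨dx.append dy.reverse, ?_⟩
    intro w hw hwx hwy
    rw [Walk.support_append, List.mem_append] at hw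
    rcases hw with hw | hw
    · exact hdx w hw hwx
    · have := List.mem_of_mem_tail hw
      rw [Walk.support_reverse, List.mem_reverse] at this
      exact hdy w this hwy
  obtain ⟨P, hPC, hPpath, hPchord⟩ := exists_chordless_path Cu hexu
  obtain ⟨Q, hQC, hQpath, hQchord⟩ := exists_chordless_path Cv hexv
  have hPQdisj : ∀ a, a ∈ P.support → a ∈ Q.support → a = x ∨ a = y := by
    intro a haP haQ
    by_contra hcon
    push_neg at hcon
    exact hdisj a (hPC a haP hcon.1 hcon.2) (hQC a haQ hcon.1 hcon.2)
  have hlP : 2 ≤ P.length := by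
    rcases Nat.lt_or_ge P.length 2 with hlt | hge
    · interval_cases hl : P.length
      · exact absurd (Walk.eq_of_length_eq_zero hl) hxy
      · exact absurd (P.adj_of_mem_edges (edge_mem_of_len_one P hl)) hnadj2
    · exact hge
  have hlQ : 2 ≤ Q.length := by
    rcases Nat.lt_or_ge Q.length 2 with hlt | hge
    · interval_cases hl : Q.length
      · exact absurd (Walk.eq_of_length_eq_zero hl) hxy
      · exact absurd (Q.adj_of_mem_edges (edge_mem_of_len_one Q hl)) hnadj2
    · exact hge
  have hWlen : 4 ≤ (P.append Q.reverse).length := by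
    rw [Walk.length_append, Walk.length_reverse]
    omega
  have hWcyc : (P.append Q.reverse).IsCycle := by
    rw [Walk.isCycle_def]
    refine ⟨?_, ?_, ?_⟩
    · rw [Walk.isTrail_def, Walk.edges_append, Walk.edges_reverse]
      refine List.Nodup.append hPpath.isTrail.edges_nodup
        (List.nodup_reverse.mpr hQpath.isTrail.edges_nodup) ?_
      intro e heP heQ
      rw [List.mem_reverse] at heQ
      revert heP heQ
      induction e using Sym2.ind with
      | _ a b =>
        intro heP heQ
        have hab : G.Adj a b := P.adj_of_mem_edges heP
        rcases hPQdisj a (P.fst_mem_support_of_mem_edges heP)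
            (Q.fst_mem_support_of_mem_edges heQ) with ha | ha <;>
          rcases hPQdisj b (P.snd_mem_support_of_mem_edges heP)
            (Q.snd_mem_support_of_mem_edges heQ) with hb | hb <;>
          subst ha <;> subst hb
        · exact hab.ne rfl
        · exact hnadj2 hab
        · exact hnadj2 hab.symm
        · exact hab.ne rfl
    · intro hnil
      rw [hnil] at hWlen
      simp at hWlen
    · have h1 : (P.append Q.reverse).support = P.support ++ Q.reverse.support.tail :=
        Walk.support_append _ _
      rw [h1, Walk.support_eq_cons P, List.cons_append, List.tail_cons]
      refine List.Nodup.append ?_ ?_ ?_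
      · exact (hPpath.support_nodup).tail
      · exact (hQpath.reverse.support_nodup).tail
      · intro a haP haQ
        have haP' : a ∈ P.support := List.mem_of_mem_tail haP
        have hax : a ≠ x := by
          intro h; subst h
          have hnd := hPpath.support_nodup
          rw [Walk.support_eq_cons P, List.nodup_cons] at hnd
          exact hnd.1 haP
        have haQ' : a ∈ Q.support := by
          have := List.mem_of_mem_tail haQ
          rwa [Walk.support_reverse, List.mem_reverse] at this
        have hay : a ≠ y := by
          intro h; subst h
          have hnd := hQpath.reverse.support_nodup
          rw [Walk.support_eq_cons Q.reverse, List.nodup_cons] at hnd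
          exact hnd.1 haQ
        rcases hPQdisj a haP' haQ' with h | h
        · exact hax h
        · exact hay h
  obtain ⟨a, b, haW, hbW, hab, habW⟩ := hch (P.append Q.reverse) hWcyc hWlen
  have hmem : ∀ c, c ∈ (P.append Q.reverse).support → c ∈ P.support ∨ c ∈ Q.support := by
    intro c hc
    rw [Walk.support_append, List.mem_append] at hc
    rcases hc with hc | hc
    · exact Or.inl hc
    · right
      have := List.mem_of_mem_tail hc
      rwa [Walk.support_reverse, List.mem_reverse] at this
  have hPedge : ∀ e ∈ P.edges, e ∈ (P.append Q.reverse).edges := by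
    intro e he
    rw [Walk.edges_append, List.mem_append]
    exact Or.inl he
  have hQedge : ∀ e ∈ Q.edges, e ∈ (P.append Q.reverse).edges := by
    intro e he
    rw [Walk.edges_append, List.mem_append, Walk.edges_reverse, List.mem_reverse]
    exact Or.inr he
  have hcaseP : a ∈ P.support → b ∈ P.support → False := fun haP hbP =>
    habW (hPedge _ (hPchord a b haP hbP hab))
  have hcaseQ : a ∈ Q.support → b ∈ Q.support → False := fun haQ hbQ =>
    habW (hQedge _ (hQchord a b haQ hbQ hab))
  have hendP : ∀ c, c = x ∨ c = y → c ∈ P.support := by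
    rintro c (rfl | rfl)
    · exact P.start_mem_support
    · exact P.end_mem_support
  have hendQ : ∀ c, c = x ∨ c = y → c ∈ Q.support := by
    rintro c (rfl | rfl)
    · exact Q.start_mem_support
    · exact Q.end_mem_support
  rcases hmem a haW with haP | haQ <;> rcases hmem b hbW with hbP | hbQ
  · exact hcaseP haP hbP
  · -- a ∈ P, b ∈ Q
    by_cases hb' : b = x ∨ b = y
    · exact hcaseP haP (hendP b hb')
    by_cases ha' : a = x ∨ a = y
    · exact hcaseQ (hendQ a ha') hbQ
    push_neg at ha' hb'
    exact hnoedge a b (hPC a haP ha'.1 ha'.2) (hQC b hbQ hb'.1 hb'.2) hab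
  · -- a ∈ Q, b ∈ P
    by_cases hb' : b = x ∨ b = y
    · exact hcaseQ haQ (hendQ b hb')
    by_cases ha' : a = x ∨ a = y
    · exact hcaseP (hendP a ha') hbP
    push_neg at ha' hb'
    exact hnoedge b a (hPC b hbP hb'.1 hb'.2) (hQC a haQ ha'.1 ha'.2) hab.symm
  · exact hcaseQ haQ hbQ
end

section
/- If G is an interval graph arising from a family of intervals whose associated interval order ≺ (I ≺ J iff the right endpoint of I is less than the left endpoint of J) has an ordered clique cover of G of length l(G,G), then the order dimension of ≺ is at most l(G,G) + 2. -/
/-!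
Colour each interval by the index of its clique modulo `l + 1`. Two overlapping intervals lie in
cliques whose indices differ by at most `l`, so if they have the same colour they lie in the same
clique. For every colour `b` there is a linear extension of the interval order that places the
intervals of colour `b` at their right endpoints and all others at their left endpoints; it puts
every interval of another colour that meets an interval `i` of colour `b` before `i`. Within one
colour class it sorts by right endpoint. One more linear extension, sorting first by a common point
of each clique (which exists by the one-dimensional Helly property) and then by decreasing right
endpoint, reverses that order on every clique. Hence these `l + 2` linear extensions reverse every
incomparable pair, so their intersection is the interval order.
-/

open Function Set

theorem rel_iff_forall_of_reverse_incomparable {ι κ : Type*} [Nonempty κ]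
    {R : ι → ι → Prop} {L : κ → ι → ι → Prop} (hL : ∀ m, IsStrictTotalOrder ι (L m))
    (hext : ∀ m i j, R i j → L m i j)
    (hrev : ∀ i j, i ≠ j → ¬R i j → ¬R j i → ∃ m, L m j i) (i j : ι) :
    R i j ↔ ∀ m, L m i j := by
  refine ⟨fun h m => hext m i j h, fun h => by_contra fun hij => ?_⟩
  obtain ⟨m⟩ := ‹Nonempty κ›
  have := hL m
  rcases eq_or_ne i j with rfl | hne
  · exact irrefl_of (L m) i (h m)
  by_cases hji : R j i
  · exact asymm_of (L m) (h m) (hext m j i hji)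
  obtain ⟨m', hm'⟩ := hrev i j hne hij hji
  have := hL m'
  exact asymm_of (L m') (h m') hm'

theorem Finset.exists_forall_mem_Icc_of_pairwise {ι α : Type*} [LinearOrder α] [Nonempty α]
    {lo hi : ι → α} (hlh : ∀ i, lo i ≤ hi i) (s : Finset ι)
    (hs : (s : Set ι).Pairwise fun i j =>
      (Set.Icc (lo i) (hi i) ∩ Set.Icc (lo j) (hi j)).Nonempty) :
    ∃ x, ∀ i ∈ s, x ∈ Set.Icc (lo i) (hi i) := by
  rcases s.eq_empty_or_nonempty with rfl | hne
  · simp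
  refine ⟨s.sup' hne lo, fun i his => ⟨le_sup' lo his, sup'_le hne lo fun j hjs => ?_⟩⟩
  rcases eq_or_ne j i with rfl | hji
  · exact hlh j
  obtain ⟨x, hxj, hxi⟩ := hs hjs his hji
  exact hxj.1.trans hxi.2

section Keys

variable {ι α : Type*} {lo hi : ι → α} {i j : ι} {P : ι → Prop} [DecidablePred P] {p : ι → α}

-- `false < true`: at a common position a left endpoint comes before a right one, since closed
-- intervals touching there overlap.
variable (lo hi P) in
def endpointKey (i : ι) : α ×ₗ Bool ×ₗ ι :=
  toLex (if P i then hi i else lo i, toLex (decide (P i), i))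

variable (hi) in
def pointKey (p : ι → α) (i : ι) : α ×ₗ (α ×ₗ ι)ᵒᵈ :=
  toLex (p i, OrderDual.toDual (toLex (hi i, i)))

theorem endpointKey_injective : Injective (endpointKey lo hi P) := fun i j h => by
  simp only [endpointKey, toLex_inj, Prod.mk.injEq] at h
  exact h.2.2

theorem pointKey_injective : Injective (pointKey hi p) := fun i j h => by
  simp only [pointKey, toLex_inj, Prod.mk.injEq, OrderDual.toDual_inj] at h
  exact h.2.2

variable [LinearOrder ι] [LinearOrder α]

theorem endpointKey_lt_of_hi_lt_lo (hlh : ∀ i, lo i ≤ hi i) (h : hi i < lo j) :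
    endpointKey lo hi P i < endpointKey lo hi P j := by
  refine Prod.Lex.toLex_lt_toLex.mpr (Or.inl ?_)
  calc (if P i then hi i else lo i) ≤ hi i := by split_ifs <;> simp [hlh i]
    _ < lo j := h
    _ ≤ if P j then hi j else lo j := by split_ifs <;> simp [hlh j]

theorem endpointKey_lt_of_not (hPi : P i) (hPj : ¬P j) (h : lo j ≤ hi i) :
    endpointKey lo hi P j < endpointKey lo hi P i := by
  simp only [endpointKey, hPi, hPj, if_true, if_false, decide_true, decide_false,
    Prod.Lex.toLex_lt_toLex]
  rcases h.lt_or_eq with h | h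
  · exact Or.inl h
  · exact Or.inr ⟨h, Or.inl Bool.false_lt_true⟩

theorem endpointKey_lt_endpointKey_iff (hPi : P i) (hPj : P j) :
    endpointKey lo hi P i < endpointKey lo hi P j ↔ toLex (hi i, i) < toLex (hi j, j) := by
  simp [endpointKey, hPi, hPj, Prod.Lex.toLex_lt_toLex]

theorem pointKey_lt_of_hi_lt_lo (hp : ∀ i, p i ∈ Icc (lo i) (hi i)) (h : hi i < lo j) :
    pointKey hi p i < pointKey hi p j :=
  Prod.Lex.toLex_lt_toLex.mpr (Or.inl (((hp i).2.trans_lt h).trans_le (hp j).1))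

theorem pointKey_lt_pointKey_iff (h : p i = p j) :
    pointKey hi p i < pointKey hi p j ↔ toLex (hi j, j) < toLex (hi i, i) := by
  simp [pointKey, h, Prod.Lex.toLex_lt_toLex]

end Keys

theorem exists_realizer_of_coloring {ι α β : Type*} [LinearOrder α] {lo hi : ι → α}
    (hlh : ∀ i, lo i ≤ hi i) (p : ι → α) (hp : ∀ i, p i ∈ Icc (lo i) (hi i)) (c : ι → β)
    (hc : ∀ i j, (Icc (lo i) (hi i) ∩ Icc (lo j) (hi j)).Nonempty → c i = c j → p i = p j) :
    ∃ L : Option β → ι → ι → Prop,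
      (∀ m, IsStrictTotalOrder ι (L m)) ∧ ∀ i j, hi i < lo j ↔ ∀ m, L m i j := by
  classical
  -- breaks the ties between intervals with equal endpoints
  let : LinearOrder ι := WellOrderingRel.isWellOrder.linearOrder
  let L : Option β → ι → ι → Prop := fun m =>
    m.elim ((· < ·) on pointKey hi p) fun b => (· < ·) on endpointKey lo hi (c · = b)
  have hL : ∀ m, IsStrictTotalOrder ι (L m) := by
    rintro (_ | b)
    · exact pointKey_injective.isStrictTotalOrder_onFun (· < ·)
    · exact endpointKey_injective.isStrictTotalOrder_onFun (· < ·)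
  refine ⟨L, hL, rel_iff_forall_of_reverse_incomparable hL ?_ ?_⟩
  · rintro (_ | b) i j h
    · exact pointKey_lt_of_hi_lt_lo hp h
    · exact endpointKey_lt_of_hi_lt_lo hlh h
  intro i j hne hij hji
  rw [not_lt] at hij hji
  by_cases hcij : c i = c j
  · have hover : (Icc (lo i) (hi i) ∩ Icc (lo j) (hi j)).Nonempty := by
      rw [Icc_inter_Icc, nonempty_Icc]
      exact le_inf (sup_le (hlh i) hij) (sup_le hji (hlh j))
    have hpij : p i = p j := hc i j hover hcij
    have : toLex (hi i, i) ≠ toLex (hi j, j) := by simp [hne]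
    rcases this.lt_or_gt with hlt | hgt
    · exact ⟨none, (pointKey_lt_pointKey_iff hpij.symm).mpr hlt⟩
    · exact ⟨some (c i),
        (endpointKey_lt_endpointKey_iff (P := (c · = c i)) hcij.symm rfl).mpr hgt⟩
  · exact ⟨some (c i), endpointKey_lt_of_not rfl (Ne.symm hcij) hij⟩

theorem interval_order_dimension_general {ι : Type*}
    (lo hi : ι → ℝ) (hlh : ∀ i, lo i ≤ hi i)
    (k l : ℕ) (C : Fin k → Finset ι)
    (hclique : ∀ m : Fin k, ∀ i ∈ C m, ∀ j ∈ C m, i ≠ j →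
      (Set.Icc (lo i) (hi i) ∩ Set.Icc (lo j) (hi j)).Nonempty)
    (hcover : ∀ i : ι, ∃ m, i ∈ C m)
    (hlen : ∀ i j : ι, i ≠ j →
      (Set.Icc (lo i) (hi i) ∩ Set.Icc (lo j) (hi j)).Nonempty →
      ∀ s t : Fin k, i ∈ C s → j ∈ C t →
        |((s : ℕ) : ℤ) - ((t : ℕ) : ℤ)| ≤ l) :
    ∃ L : Fin (l + 2) → ι → ι → Prop,
      (∀ m, IsStrictTotalOrder ι (L m)) ∧
      ∀ i j : ι, hi i < lo j ↔ ∀ m, L m i j := by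
  choose cl hcl using hcover
  choose q hq using fun m => (C m).exists_forall_mem_Icc_of_pairwise hlh
    fun i hiC j hjC => hclique m i hiC j hjC
  let c (i : ι) : Fin (l + 1) := ⟨cl i % (l + 1), Nat.mod_lt _ l.succ_pos⟩
  have hc : ∀ i j, (Icc (lo i) (hi i) ∩ Icc (lo j) (hi j)).Nonempty → c i = c j →
      q (cl i) = q (cl j) := by
    intro i j hover hcij
    rcases eq_or_ne i j with rfl | hne
    · rfl
    have hdist := hlen i j hne hover _ _ (hcl i) (hcl j)
    have hclij : (cl i : ℕ) = cl j := Nat.ModEq.eq_of_abs_lt (congrArg Fin.val hcij) <| by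
      rw [abs_sub_comm]; push_cast; linarith
    rw [Fin.val_injective hclij]
  obtain ⟨L, hL, hLR⟩ :=
    exists_realizer_of_coloring hlh (fun i => q (cl i)) (fun i => hq _ i (hcl i)) c hc
  exact ⟨L ∘ finSuccEquiv (l + 1), fun m => hL _,
    fun i j => (hLR i j).trans (finSuccEquiv (l + 1)).forall_congr_right.symm⟩

/-- For an interval graph `G` given by intervals `[lo i, hi i]`, with the interval
order `≺` (`i ≺ j` iff `hi i < lo j`), if `G` has an ordered clique cover of
length at most `l`, then the order dimension of `≺` is at most `l + 2`: there are
`l + 2` strict linear orders whose intersection is `≺`. -/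
theorem interval_order_dimension {ι : Type*} [Fintype ι]
    (lo hi : ι → ℝ) (hlh : ∀ i, lo i ≤ hi i)
    (k l : ℕ) (C : Fin k → Finset ι)
    (hclique : ∀ m : Fin k, ∀ i ∈ C m, ∀ j ∈ C m, i ≠ j →
      (Set.Icc (lo i) (hi i) ∩ Set.Icc (lo j) (hi j)).Nonempty)
    (hcover : ∀ i : ι, ∃ m, i ∈ C m)
    (hdisj : ∀ m m' : Fin k, m ≠ m' → Disjoint (C m) (C m'))
    (hlen : ∀ i j : ι, i ≠ j →
      (Set.Icc (lo i) (hi i) ∩ Set.Icc (lo j) (hi j)).Nonempty →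
      ∀ s t : Fin k, i ∈ C s → j ∈ C t →
        |((s : ℕ) : ℤ) - ((t : ℕ) : ℤ)| ≤ l) :
    ∃ L : Fin (l + 2) → ι → ι → Prop,
      (∀ m, IsStrictTotalOrder ι (L m)) ∧
      ∀ i j : ι, hi i < lo j ↔ ∀ m, L m i j :=
  interval_order_dimension_general lo hi hlh k l C hclique hcover hlen
end
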